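/- arXiv:0903.2410 — 5 statements merged into one kernel-verified Lean document; each statement's English description precedes it below -/
import Mathlib

section
/- Let α be a type and g : α → α. Then for all k, m, n ∈ ℕ and all w ∈ α, F_g (k+1) m n w = g^[m * n^k] w, where g^[j] denotes the j-fold iterate of g. -/
/-- The paper's sequence of polynomial-length iterators `F_g`, parameterized by `g`:
`F g 0 t x y = g y`; `F g (k+1) 0 x y = y`; `F g (k+1) (t+1) x y = F g k x x (F g (k+1) t x y)`. -/
def F {α : Type*} (g : α → α) : ℕ → ℕ → ℕ → α → α
  | 0, _, _, y => g y
  | _ + 1, 0, _, y => y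
  | k + 1, t + 1, x, y => F g k x x (F g (k + 1) t x y)
  termination_by k t => (k, t)

theorem stmt_0 {α : Type*} (g : α → α) :
    ∀ (k m n : ℕ) (w : α), F g (k + 1) m n w = g^[m * n ^ k] w := by
  intro k
  induction k with
  | zero =>
    intro m n w
    induction m with
    | zero => simp [F]
    | succ m ih =>
      rw [show (0:ℕ)+1 = 0+1 from rfl, F]
      simp [F, ih, succ_nsmul, Function.iterate_add_apply, Nat.succ_mul,
        Function.iterate_succ_apply']
  | succ k ih =>
    intro m n w
    induction m with
    | zero => simp [F]
    | succ m ihm =>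
      rw [F, ihm, ih n n, ← Function.iterate_add_apply]
      congr 1
      ring
end

section
/- Let α be a type, g : α → α, k ∈ ℕ, and Q : ℕ → ℕ. Define T : ℕ → ℕ → α → α by T 0 x y = g^[Q x] y and T (d+1) x y = F_g (k+1) x x (T d x y). Then for all c, x ∈ ℕ and y ∈ α, T c x y = g^[c * x^(k+1) + Q x] y. -/
/-- The iterator `T` from the proof of the paper's Lemma 4.2:
`T 0 x y = g^[Q x] y` and `T (d+1) x y = F g (k+1) x x (T d x y)`. -/
def T {α : Type*} (g : α → α) (k : ℕ) (Q : ℕ → ℕ) : ℕ → ℕ → α → α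
  | 0, x, y => g^[Q x] y
  | d + 1, x, y => F g (k + 1) x x (T g k Q d x y)

lemma F_eq {α : Type*} (g : α → α) :
    ∀ (k t x : ℕ) (y : α), F g (k + 1) t x y = g^[t * x ^ k] y := by
  intro k
  induction k with
  | zero =>
    intro t
    induction t with
    | zero => intro x y; simp [F]
    | succ t ih =>
      intro x y
      rw [F, ih, F]
      simp [Function.iterate_succ_apply']
  | succ k ih =>
    intro t
    induction t with
    | zero => intro x y; simp [F]
    | succ t iht =>
      intro x y
      rw [F, iht, ih, ← Function.iterate_add_apply]
      ring_nf

theorem stmt_1 {α : Type*} (g : α → α) (k : ℕ) (Q : ℕ → ℕ) :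
    ∀ (c x : ℕ) (y : α), T g k Q c x y = g^[c * x ^ (k + 1) + Q x] y := by
  intro c
  induction c with
  | zero => intro x y; simp [T]
  | succ c ih =>
    intro x y
    rw [T, ih, F_eq, ← Function.iterate_add_apply]
    ring_nf
end

section
/- Let p, k, a', b' ∈ ℕ, let h : (Fin p → ℕ) → ℕ satisfy h x⃗ ≤ a' * (∑ i, (x⃗ i)^k) + b' for all x⃗, and let g : ℕ → ℕ satisfy n < g n for all n. Then there exist a, b ∈ ℕ such that for all x⃗ : Fin p → ℕ and all x ∈ ℕ with x⃗ i ≤ x for every i, one has h x⃗ ≤ F_g (k+1) a x b. -/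
lemma F_eq_iterate {α : Type*} (g : α → α) :
    ∀ k t x y, F g (k + 1) t x y = g^[t * x ^ k] y := by
  intro k
  induction k with
  | zero =>
    intro t
    induction t with
    | zero => intro x y; simp [F]
    | succ t ih =>
      intro x y
      rw [F, ih]
      simp [F, Function.iterate_succ_apply']
  | succ k ihk =>
    intro t
    induction t with
    | zero => intro x y; simp [F]
    | succ t ih =>
      intro x y
      rw [F, ih, ihk, ← Function.iterate_add_apply]
      ring_nf

lemma le_iterate_of_lt {g : ℕ → ℕ} (hg : ∀ n, n < g n) (j y : ℕ) : y + j ≤ g^[j] y := by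
  induction j with
  | zero => simp
  | succ j ih =>
    rw [Function.iterate_succ_apply']
    exact le_trans (by omega) (hg (g^[j] y))

theorem stmt_3 (p k a' b' : ℕ) (h : (Fin p → ℕ) → ℕ)
    (hh : ∀ xs : Fin p → ℕ, h xs ≤ a' * (∑ i, (xs i) ^ k) + b')
    (g : ℕ → ℕ) (hg : ∀ n, n < g n) :
    ∃ a b : ℕ, ∀ (xs : Fin p → ℕ) (x : ℕ), (∀ i, xs i ≤ x) →
      h xs ≤ F g (k + 1) a x b := by
  refine ⟨a' * p, b', fun xs x hx => ?_⟩
  rw [F_eq_iterate]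
  calc h xs ≤ a' * (∑ i, (xs i) ^ k) + b' := hh xs
    _ ≤ a' * (∑ _i : Fin p, x ^ k) + b' := by
        gcongr with i
        exact hx i
    _ = b' + a' * p * x ^ k := by simp [Finset.sum_const]; ring
    _ ≤ g^[a' * p * x ^ k] b' := le_iterate_of_lt hg _ _
end

section
/- Consider Δω with g = Nat.succ on ℕ. Then for every n ≥ 1, Δω_succ n n n n = n^n + n. -/
/-- The paper's double-recursion operator `Δ^ω[g]` specialized to the successor on `ℕ`:
`Δωsucc 0 r x y = y + 1`; `Δωsucc (k+1) 0 x y = y`;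
`Δωsucc (k+1) (r+1) x y = Δωsucc k x x (Δωsucc (k+1) r x y)`. -/
def Δωsucc : ℕ → ℕ → ℕ → ℕ → ℕ
  | 0, _, _, y => y + 1
  | _ + 1, 0, _, y => y
  | k + 1, r + 1, x, y => Δωsucc k x x (Δωsucc (k + 1) r x y)
  termination_by k r => (k, r)

lemma Δωsucc_eq : ∀ k r x y : ℕ, Δωsucc (k + 1) r x y = y + r * x ^ k := by
  intro k
  induction k with
  | zero =>
    intro r
    induction r with
    | zero => intro x y; simp [Δωsucc]
    | succ r ih => intro x y; rw [Δωsucc, ih]; simp [Δωsucc]; ring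
  | succ k ih =>
    intro r
    induction r with
    | zero => intro x y; simp [Δωsucc]
    | succ r ihr =>
      intro x y
      rw [Δωsucc, ihr, ih]
      ring

theorem stmt_8 : ∀ n : ℕ, 1 ≤ n → Δωsucc n n n n = n ^ n + n := by
  intro n hn
  obtain ⟨m, rfl⟩ : ∃ m, n = m + 1 := ⟨n - 1, (Nat.succ_pred_eq_of_pos hn).symm⟩
  rw [Δωsucc_eq]
  ring
end

section
/- Consider Δω with g = Nat.succ on ℕ, and let φ : ℕ → ℕ be defined by φ n = Δω_succ n n n n. Then for every polynomial P with natural-number coefficients there exists n ∈ ℕ with P.eval n < φ n; in particular φ is not bounded above by any polynomial. -/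
/-- The diagonal function `φ(n) = Δ^ω[succ](n, n, n, n)` of the paper's Proposition 5.5. -/
def φ (n : ℕ) : ℕ := Δωsucc n n n n

theorem Δωsucc_succ (k r x y : ℕ) : Δωsucc (k + 1) r x y = y + r * x ^ k := by
  induction k generalizing r y with
  | zero =>
    induction r generalizing y with
    | zero => simp [Δωsucc]
    | succ r ih => rw [Δωsucc, ih, Δωsucc]; ring
  | succ k ihk =>
    induction r generalizing y with
    | zero => simp [Δωsucc]
    | succ r ihr => rw [Δωsucc, ihr, ihk]; ring

theorem pow_self_le_φ (n : ℕ) : n ^ n ≤ φ n := by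
  cases n with
  | zero => simp [φ, Δωsucc]
  | succ m => rw [φ, Δωsucc_succ, ← pow_succ']; exact Nat.le_add_left _ _

theorem Polynomial.eval_le_eval_one_mul_pow_natDegree (P : Polynomial ℕ) {n : ℕ} (hn : 1 ≤ n) :
    P.eval n ≤ P.eval 1 * n ^ P.natDegree := by
  rw [Polynomial.eval_eq_sum_range, Polynomial.eval_eq_sum_range, Finset.sum_mul]
  refine Finset.sum_le_sum fun i hi => ?_
  rw [one_pow, mul_one]
  exact Nat.mul_le_mul_left _ (Nat.pow_le_pow_right hn (Finset.mem_range_succ_iff.mp hi))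

theorem Polynomial.eval_lt_pow_self (P : Polynomial ℕ) {n : ℕ} (h1 : P.eval 1 < n)
    (hdeg : P.natDegree < n) : P.eval n < n ^ n :=
  calc P.eval n ≤ P.eval 1 * n ^ P.natDegree := P.eval_le_eval_one_mul_pow_natDegree (by omega)
    _ < n * n ^ P.natDegree := Nat.mul_lt_mul_of_pos_right h1 (pow_pos (by omega) _)
    _ = n ^ (P.natDegree + 1) := (pow_succ' n _).symm
    _ ≤ n ^ n := Nat.pow_le_pow_right (by omega) hdeg

theorem stmt_9 : ∀ P : Polynomial ℕ, ∃ n : ℕ, P.eval n < φ n := by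
  intro P
  set n := max (P.eval 1) P.natDegree + 1
  exact ⟨n, (P.eval_lt_pow_self (by omega) (by omega)).trans_le (pow_self_le_φ n)⟩
end
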